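/- arXiv:1305.6380 — 5 statements merged into one kernel-verified Lean document; each statement's English description precedes it below -/
import Mathlib

section
/- Let p be a prime and let k be the field with p elements. Let K be a field extension of k, let X be a subset of K which is a transcendence set over k, and let L = k(X) be the subfield of K generated by k and X. Let γ be a k-monomorphism of L such that for each x ∈ X there is a non-negative integer n_x with γ(x) = x^{p^{n_x}}. Let N be an integer satisfying N > n_x for all x ∈ X. If a ∈ L satisfies γ(a) = a^{p^N}, then a ∈ k. -/
/-!
Every generator satisfies `x ^ p ^ N = γ ((x ^ p ^ (N - n x - 1)) ^ p)` because `N > n x`, so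
`L ^ p ^ N ⊆ γ (L ^ p)`. If `γ a = a ^ p ^ N`, write `a ^ p ^ N = γ (c ^ p)`: injectivity of `γ`
gives `a = c ^ p`, and injectivity of Frobenius shows that `c` satisfies the same equation.
Hence `a` is a `p ^ m`-th power in `L ≅ 𝔽_p(X)` for every `m`. In the fraction field of a UFD an
element that is an `n`-th power for arbitrarily large `n` is a unit of the ring (write the root in
lowest terms and count prime factors), and the units of `𝔽_p[X]` are the nonzero constants.
-/

open UniqueFactorizationMonoid

theorem UniqueFactorizationMonoid.isUnit_of_pow_dvd_of_card_factors_lt {R : Type*}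
    [CommMonoidWithZero R] [UniqueFactorizationMonoid R] {x y : R} {n : ℕ} (hy : y ≠ 0)
    (hn : Multiset.card (factors y) < n) (h : x ^ n ∣ y) : IsUnit x := by
  obtain ⟨c, rfl⟩ := h
  have hxn : x ^ n ≠ 0 := left_ne_zero_of_mul hy
  have hx : x ≠ 0 := ne_zero_pow (by omega) hxn
  by_contra hu
  have hpos : 0 < Multiset.card (factors x) := Multiset.card_pos.mpr ((factors_pos hx).mpr hu).ne'
  have hle : n * Multiset.card (factors x) ≤ Multiset.card (factors (x ^ n * c)) := by
    rw [Multiset.card_eq_card_of_rel (factors_mul hxn (right_ne_zero_of_mul hy)),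
      Multiset.card_add, Multiset.card_eq_card_of_rel (factors_pow n), Multiset.card_nsmul]
    omega
  nlinarith

theorem IsFractionRing.exists_unit_eq_of_forall_exists_pow_eq {R K : Type*} [CommRing R]
    [IsDomain R] [UniqueFactorizationMonoid R] [Field K] [Algebra R K] [IsFractionRing R K]
    {A : K} (hA : A ≠ 0) (h : ∀ N, ∃ n > N, ∃ B : K, B ^ n = A) :
    ∃ u : Rˣ, algebraMap R K u = A := by
  obtain ⟨f, g, hg, rfl⟩ := IsFractionRing.div_surjective (A := R) A
  have hg0 : algebraMap R K g ≠ 0 := IsFractionRing.to_map_ne_zero_of_mem_nonZeroDivisors hg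
  have hf0 : f ≠ 0 := by rintro rfl; simp at hA
  obtain ⟨n, hn, B, hB⟩ := h (max (Multiset.card (factors f)) (Multiset.card (factors g)))
  obtain ⟨u, v, huv, rfl⟩ := IsFractionRing.exists_reduced_fraction R B
  have hv0 : algebraMap R K v ≠ 0 := IsFractionRing.to_map_ne_zero_of_mem_nonZeroDivisors v.2
  have key : g * u ^ n = f * v ^ n := by
    apply IsFractionRing.injective R K
    rw [IsFractionRing.mk'_eq_div, div_pow, div_eq_div_iff (pow_ne_zero _ hv0) hg0] at hB
    simpa only [map_mul, map_pow, mul_comm] using hB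
  have hu : IsUnit u := isUnit_of_pow_dvd_of_card_factors_lt hf0 (by omega)
    (huv.pow.dvd_of_dvd_mul_right (Dvd.intro_left _ key))
  have hv : IsUnit (v : R) :=
    isUnit_of_pow_dvd_of_card_factors_lt (nonZeroDivisors.ne_zero hg) (by omega)
      (huv.pow.symm.dvd_of_dvd_mul_right (Dvd.intro_left _ key.symm))
  refine ⟨(hu.unit * hv.unit⁻¹) ^ n, ?_⟩
  rw [← hB, IsFractionRing.mk'_eq_div]
  simp [div_eq_mul_inv, mul_pow]

theorem MvPolynomial.exists_algebraMap_eq_of_forall_exists_pow_eq {σ F : Type*} [Field F]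
    {A : FractionRing (MvPolynomial σ F)} (h : ∀ N, ∃ n > N, ∃ B, B ^ n = A) :
    ∃ c : F, algebraMap F _ c = A := by
  rcases eq_or_ne A 0 with rfl | hA
  · exact ⟨0, map_zero _⟩
  obtain ⟨u, rfl⟩ :=
    IsFractionRing.exists_unit_eq_of_forall_exists_pow_eq (R := MvPolynomial σ F) hA h
  obtain ⟨c, -, hc⟩ := (isUnit_iff_eq_C_of_isReduced (P := (u : MvPolynomial σ F))).mp u.isUnit
  exact ⟨c, by rw [hc, IsScalarTower.algebraMap_apply F (MvPolynomial σ F), algebraMap_eq]⟩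

section FrobeniusDescent

variable {R : Type*} [CommRing R] [IsReduced R] {p : ℕ} [ExpChar R p] {γ : R →+* R} {N : ℕ}

theorem exists_pow_char_eq_of_map_eq_pow_char_pow (hγ : Function.Injective γ)
    (hrange : ∀ y, ∃ z, γ (z ^ p) = y ^ p ^ N) {b : R} (hb : γ b = b ^ p ^ N) :
    ∃ c, c ^ p = b ∧ γ c = c ^ p ^ N := by
  obtain ⟨c, hc⟩ := hrange b
  have hcb : c ^ p = b := hγ (hc.trans hb.symm)
  refine ⟨c, hcb, frobenius_inj R p ?_⟩
  simp only [frobenius_def]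
  rw [← map_pow, hcb, hb, ← hcb, ← pow_mul, ← pow_mul, mul_comm]

theorem exists_pow_char_pow_eq_of_map_eq_pow_char_pow (hγ : Function.Injective γ)
    (hrange : ∀ y, ∃ z, γ (z ^ p) = y ^ p ^ N) {a : R} (ha : γ a = a ^ p ^ N) (m : ℕ) :
    ∃ c, c ^ p ^ m = a := by
  suffices ∃ c, γ c = c ^ p ^ N ∧ c ^ p ^ m = a from this.imp fun _ ↦ And.right
  induction m with
  | zero => exact ⟨a, ha, pow_one a⟩
  | succ m ih =>
    obtain ⟨b, hb, rfl⟩ := ih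
    obtain ⟨c, rfl, hc⟩ := exists_pow_char_eq_of_map_eq_pow_char_pow hγ hrange hb
    exact ⟨c, hc, by rw [pow_succ', pow_mul]⟩

end FrobeniusDescent

open IntermediateField in
theorem exists_map_pow_char_eq_pow_char_pow {p : ℕ} [Fact p.Prime] {K : Type*} [Field K]
    [Algebra (ZMod p) K] {X : Set K} (γ : adjoin (ZMod p) X →ₐ[ZMod p] adjoin (ZMod p) X)
    {n : K → ℕ} (hγX : ∀ x (hx : x ∈ X), (γ ⟨x, subset_adjoin _ _ hx⟩ : K) = x ^ p ^ n x)
    {N : ℕ} (hN : ∀ x ∈ X, n x < N) (y : adjoin (ZMod p) X) :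
    ∃ z, γ (z ^ p) = y ^ p ^ N := by
  let ψ := FiniteField.frobeniusAlgHom (ZMod p) K ^ N
  let δ := (adjoin (ZMod p) X).val.comp (γ.comp (FiniteField.frobeniusAlgHom (ZMod p) _))
  have hψ : ∀ x, ψ x = x ^ p ^ N := by
    intro x
    simp [ψ, FiniteField.coe_frobeniusAlgHom]
  have hδ : ∀ z, δ z = γ (z ^ p) := by
    intro z
    simp [δ, FiniteField.coe_frobeniusAlgHom]
  have hle : (adjoin (ZMod p) X).map ψ ≤ δ.fieldRange := by
    rw [adjoin_map, adjoin_le_iff]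
    rintro _ ⟨x, hx, rfl⟩
    obtain ⟨d, hd⟩ := Nat.exists_eq_add_of_lt (hN x hx)
    refine ⟨⟨x, subset_adjoin _ _ hx⟩ ^ p ^ d, ?_⟩
    change δ _ = ψ x
    rw [hδ, hψ, ← pow_mul, ← pow_succ, map_pow, SubmonoidClass.coe_pow, hγX x hx, ← pow_mul,
      ← pow_add, hd, add_assoc]
  obtain ⟨z, hz⟩ := hle ⟨y, y.2, rfl⟩
  change δ z = ψ y at hz
  rw [hδ, hψ] at hz
  exact ⟨z, Subtype.ext hz⟩

theorem fixed_by_high_frobenius_mem_base_general (p : ℕ) [Fact p.Prime]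
    (K : Type*) [Field K] [Algebra (ZMod p) K]
    (X : Set K) (hX : AlgebraicIndependent (ZMod p) ((↑) : X → K))
    (L : IntermediateField (ZMod p) K) (hL : L = IntermediateField.adjoin (ZMod p) X)
    (γ : L →ₐ[ZMod p] L)
    (n : K → ℕ)
    (hγX : ∀ x ∈ X, ∀ hx : x ∈ L, (γ ⟨x, hx⟩ : K) = x ^ p ^ n x)
    (N : ℕ) (hN : ∀ x ∈ X, n x < N)
    (a : L) (ha : γ a = a ^ p ^ N) :
    ∃ c : ZMod p, algebraMap (ZMod p) L c = a := by
  subst hL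
  have : CharP (IntermediateField.adjoin (ZMod p) X) p :=
    charP_of_injective_algebraMap (algebraMap (ZMod p) _).injective p
  have : ExpChar (IntermediateField.adjoin (ZMod p) X) p := .prime Fact.out
  have ha_roots : ∀ m, ∃ b, b ^ p ^ m = a :=
    exists_pow_char_pow_eq_of_map_eq_pow_char_pow γ.toRingHom.injective
      (exists_map_pow_char_eq_pow_char_pow γ (fun x hx ↦ hγX x hx _) hN) ha
  let e : FractionRing (MvPolynomial X (ZMod p)) ≃ₐ[ZMod p]
      IntermediateField.adjoin (ZMod p) X :=
    hX.aevalEquivField.trans (IntermediateField.equivOfEq (by rw [Subtype.range_coe]))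
  have hA_roots : ∀ m, ∃ n > m, ∃ B, B ^ n = e.symm a := by
    intro m
    obtain ⟨b, hb⟩ := ha_roots m
    exact ⟨p ^ m, Nat.lt_pow_self (Fact.out : p.Prime).one_lt, e.symm b, by rw [← map_pow, hb]⟩
  obtain ⟨c, hc⟩ := MvPolynomial.exists_algebraMap_eq_of_forall_exists_pow_eq hA_roots
  exact ⟨c, by rw [← e.commutes, hc, e.apply_symm_apply]⟩

/-- Let `k = 𝔽_p`, let `K/k` be a field extension, `X ⊆ K` a transcendence
set over `k` and `L = k(X)`.  Let `γ` be a `k`-monomorphism of `L` which raises each `x ∈ X`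
to its `p ^ (n x)`-th power, and let `N` exceed every `n x`.  If `a ∈ L` satisfies
`γ a = a ^ (p ^ N)`, then `a ∈ k`. -/
theorem fixed_by_high_frobenius_mem_base (p : ℕ) [Fact p.Prime]
    (K : Type*) [Field K] [Algebra (ZMod p) K]
    (X : Set K) (hX : AlgebraicIndependent (ZMod p) ((↑) : X → K))
    (L : IntermediateField (ZMod p) K) (hL : L = IntermediateField.adjoin (ZMod p) X)
    (γ : L →ₐ[ZMod p] L) (hγinj : Function.Injective γ)
    (n : K → ℕ)
    (hγX : ∀ x ∈ X, ∀ hx : x ∈ L, (γ ⟨x, hx⟩ : K) = x ^ p ^ n x)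
    (N : ℕ) (hN : ∀ x ∈ X, n x < N)
    (a : L) (ha : γ a = a ^ p ^ N) :
    ∃ c : ZMod p, algebraMap (ZMod p) L c = a :=
  fixed_by_high_frobenius_mem_base_general p K X hX L hL γ n hγX N hN a ha
end

section
/- Let p be a prime and let k be the field with p elements. Let K be a field extension of k and let L be an intermediate field, k ⊆ L ⊆ K. Let γ be a k-monomorphism of K with γ(L) ⊆ L. Let n be a non-negative integer and let X be a subset of K such that γ(x) = x^{p^n} for every x ∈ X. Suppose that every l ∈ L with γ(l) = l^{p^n} lies in k. If X is a transcendence set over k, then X is a transcendence set over L. -/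
/-!
Algebraic independence of `X` over a field is linear independence of the monomials in `X`.
This passes from `k` to `L` because the additive map `γ - Frob^n` sends `c • x^m` to
`(γ c - c ^ p ^ n) • x^(p^n • m)`, and the coefficient map `c ↦ γ c - c ^ p ^ n` kills `1` and
vanishes only on `k`.
-/

open MvPolynomial

theorem algebraicIndependent_iff_linearIndependent_prod_pow {ι R A : Type*} [CommRing R]
    [CommRing A] [Algebra R A] (x : ι → A) :
    AlgebraicIndependent R x ↔
      LinearIndependent R fun m : ι →₀ ℕ => m.prod fun i e => x i ^ e := by
  rw [algebraicIndependent_iff_injective_aeval,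
    linearIndependent_iff_injective_finsuppLinearCombination]
  have : Finsupp.linearCombination R (fun m : ι →₀ ℕ => m.prod fun i e => x i ^ e) =
      (aeval x).toLinearMap ∘ₗ (basisMonomials ι R).repr.symm.toLinearMap := by
    ext m
    simp [coe_basisMonomials, aeval_monomial]
  rw [this, LinearMap.coe_comp, LinearEquiv.coe_coe, EquivLike.injective_comp]
  exact Iff.rfl

theorem Finsupp.prod_smul_pow {ι M : Type*} [CommMonoid M] (x : ι → M) (m : ι →₀ ℕ) (q : ℕ) :
    (q • m).prod (fun i e => x i ^ e) = (m.prod fun i e => x i ^ e) ^ q := by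
  rw [Finsupp.prod_of_support_subset _ Finsupp.support_smul _ fun _ _ => pow_zero _,
    Finsupp.prod, ← Finset.prod_pow]
  simp only [Finsupp.smul_apply, smul_eq_mul, mul_comm q, pow_mul]

theorem map_prod_pow_of_map_eq_pow {ι M F : Type*} [CommMonoid M] [FunLike F M M]
    [MonoidHomClass F M M] (f : F) {x : ι → M} {q : ℕ} (hf : ∀ i, f (x i) = x i ^ q)
    (m : ι →₀ ℕ) :
    f (m.prod fun i e => x i ^ e) = (m.prod fun i e => x i ^ e) ^ q := by
  rw [map_finsuppProd, Finsupp.prod, Finsupp.prod, ← Finset.prod_pow]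
  simp only [map_pow, hf, pow_right_comm]

/-- Applying `Φ` to a shortest `L`-linear relation with a coefficient `1` gives a shorter relation
(reindexed along `s`), which vanishes; so all coefficients lie in `k`. -/
theorem LinearIndependent.extendScalars_of_shift {ι k L V : Type*} [CommRing k] [DivisionRing L]
    [Algebra k L] [AddCommGroup V] [Module k V] [Module L V] [IsScalarTower k L V]
    {v : ι → V} (hv : LinearIndependent k v) {s : ι → ι} (hs : s.Injective)
    (Φ : V →+ V) (φ : L → L) (hΦ : ∀ (c : L) i, Φ (c • v i) = φ c • v (s i))
    (hφ_one : φ 1 = 0) (hφ_eq_zero : ∀ c, φ c = 0 → c ∈ Set.range (algebraMap k L)) :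
    LinearIndependent L v := by
  classical
  rw [linearIndependent_iff']
  intro t
  induction hcard : t.card using Nat.strong_induction_on generalizing t with
  | _ N ih =>
    intro g hg
    by_contra! hne
    obtain ⟨a, ha, hga⟩ := hne
    set g' : ι → L := fun i => (g a)⁻¹ * g i
    have hg' : ∑ i ∈ t, g' i • v i = 0 := by
      simp only [g', mul_smul, ← Finset.smul_sum, hg, smul_zero]
    have hg'a : g' a = 1 := inv_mul_cancel₀ hga
    set h : ι → L := Function.extend s (fun i => φ (g' i)) 0
    have hh : ∀ i, h (s i) = φ (g' i) := fun i => hs.extend_apply _ _ i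
    have hrel : ∑ j ∈ (t.erase a).image s, h j • v j = 0 := by
      rw [Finset.sum_image (fun i _ j _ hij => hs hij)]
      have := congrArg Φ hg'
      rw [map_sum, map_zero, ← Finset.add_sum_erase _ _ ha, hΦ, hg'a, hφ_one, zero_smul,
        zero_add] at this
      simpa only [hΦ, hh] using this
    have hφg' : ∀ i ∈ t, φ (g' i) = 0 := by
      intro i hi
      rcases eq_or_ne i a with rfl | hia
      · rw [hg'a, hφ_one]
      · rw [← hh]
        refine ih _ ?_ _ rfl h hrel _ (Finset.mem_image_of_mem _ (Finset.mem_erase.2 ⟨hia, hi⟩))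
        calc _ ≤ (t.erase a).card := Finset.card_image_le
          _ < N := hcard ▸ Finset.card_erase_lt_of_mem ha
    choose! c hc using fun i hi => hφ_eq_zero _ (hφg' i hi)
    have hc0 := linearIndependent_iff'.1 hv t c (by
      rw [← hg']
      exact Finset.sum_congr rfl fun i hi => by rw [← algebraMap_smul L, hc i hi])
    have := hc a ha
    rw [hc0 a ha, map_zero, hg'a] at this
    exact zero_ne_one this

theorem transcendence_set_over_intermediate_field_general (p : ℕ) [Fact p.Prime]
    (K : Type*) [Field K] [Algebra (ZMod p) K]
    (L : IntermediateField (ZMod p) K)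
    (γ : K →ₐ[ZMod p] K)
    (hγL : ∀ l ∈ L, γ l ∈ L)
    (n : ℕ) (X : Set K) (hγX : ∀ x ∈ X, γ x = x ^ p ^ n)
    (hfix : ∀ l ∈ L, γ l = l ^ p ^ n → ∃ c : ZMod p, algebraMap (ZMod p) K c = l)
    (hX : AlgebraicIndependent (ZMod p) ((↑) : X → K)) :
    AlgebraicIndependent L ((↑) : X → K) := by
  have : CharP K p := charP_of_injective_algebraMap (algebraMap (ZMod p) K).injective p
  rw [algebraicIndependent_iff_linearIndependent_prod_pow] at hX ⊢
  refine hX.extendScalars_of_shift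
    (smul_right_injective _ (pow_ne_zero n (Fact.out : p.Prime).ne_zero))
    ((γ : K →+* K).toAddMonoidHom - (iterateFrobenius K p n).toAddMonoidHom)
    (fun c => ⟨γ c - c ^ p ^ n, L.sub_mem (hγL c c.2) (pow_mem c.2 _)⟩) ?_ ?_ ?_
  · intro c m
    simp only [Algebra.smul_def, AddMonoidHom.sub_apply, RingHom.toAddMonoidHom_eq_coe,
      AddMonoidHom.coe_coe, RingHom.coe_coe, map_mul, iterateFrobenius_def]
    rw [map_prod_pow_of_map_eq_pow γ (x := ((↑) : X → K)) (fun i => hγX i i.2),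
      Finsupp.prod_smul_pow, IntermediateField.algebraMap_apply,
      IntermediateField.algebraMap_apply]
    exact (sub_mul _ _ _).symm
  · ext
    simp
  · intro c hc
    obtain ⟨c₀, hc₀⟩ := hfix c c.2 (sub_eq_zero.1 (congrArg Subtype.val hc))
    exact ⟨c₀, Subtype.ext hc₀⟩

/-- Let `k = 𝔽_p`, `k ⊆ L ⊆ K` fields, and let `γ` be a `k`-monomorphism of
`K` with `γ(L) ⊆ L`.  Suppose `γ` acts on a subset `X ⊆ K` by `p ^ n`-th powering, and that
every `l ∈ L` with `γ l = l ^ (p ^ n)` lies in `k`.  If `X` is a transcendence set over `k`,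
then `X` is a transcendence set over `L`. -/
theorem transcendence_set_over_intermediate_field (p : ℕ) [Fact p.Prime]
    (K : Type*) [Field K] [Algebra (ZMod p) K]
    (L : IntermediateField (ZMod p) K)
    (γ : K →ₐ[ZMod p] K) (hγinj : Function.Injective γ)
    (hγL : ∀ l ∈ L, γ l ∈ L)
    (n : ℕ) (X : Set K) (hγX : ∀ x ∈ X, γ x = x ^ p ^ n)
    (hfix : ∀ l ∈ L, γ l = l ^ p ^ n → ∃ c : ZMod p, algebraMap (ZMod p) K c = l)
    (hX : AlgebraicIndependent (ZMod p) ((↑) : X → K)) :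
    AlgebraicIndependent L ((↑) : X → K) :=
  transcendence_set_over_intermediate_field_general p K L γ hγL n X hγX hfix hX
end

section
/- Let k be a field, G an abelian group, H a subgroup of G, and I an ideal of the group algebra kG. Then I = (I ∩ kH)·kG if and only if for every subgroup G_1 of G generated by H together with finitely many elements of G, one has I ∩ kG_1 = (I ∩ kH)·kG_1. -/
/-!
Restriction of coefficients `kG → kG₁` is a retraction of right `kG₁`-modules of the inclusion
`kG₁ → kG`, so an ideal of `kG₁` is recovered from the ideal it generates in `kG`; this gives
`I ∩ kG₁ = (I ∩ kH)·kG₁` from `I = (I ∩ kH)·kG`. Conversely, each `x ∈ I` lies in `kG₁` for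
`G₁` generated by `H` and the finite support of `x`, hence in `(I ∩ kH)·kG₁ ⊆ (I ∩ kH)·kG`.
-/

open MonoidAlgebra

namespace Ideal

variable {R S F : Type*} [Semiring R] [Semiring S] [FunLike F R S] [RingHomClass F R S]

theorem comap_map_eq_self_of_retraction (f : F) (ρ : S →+ R)
    (hρ : ∀ s r, ρ (s * f r) = ρ s * r) (hρf : ∀ r, ρ (f r) = r) (J : Ideal R) :
    (J.map f).comap f = J := by
  refine le_antisymm (fun r hr => ?_) le_comap_map
  let K : Ideal S :=
    { carrier := {s | ∀ t, ρ (t * s) ∈ J}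
      add_mem' := fun ha hb t => by simpa only [mul_add, map_add] using J.add_mem (ha t) (hb t)
      zero_mem' := fun t => by simp
      smul_mem' := fun a s hs t => by simpa only [smul_eq_mul, mul_assoc] using hs (t * a) }
  have hK : J.map f ≤ K := map_le_iff_le_comap.2 fun j hj t => by
    simpa only [hρ] using J.mul_mem_left (ρ t) hj
  simpa only [one_mul, hρf] using hK hr 1

end Ideal

namespace MonoidAlgebra

section Semiring

variable {k G : Type*} [Semiring k] [Group G]

theorem comapDomain_subtype_mul_mapDomain (G₁ : Subgroup G) (x : k[G]) (y : k[G₁]) :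
    comapDomain G₁.subtype G₁.subtype_injective (x * mapDomain G₁.subtype y) =
      comapDomain G₁.subtype G₁.subtype_injective x * y := by
  induction y using MonoidAlgebra.induction_linear with
  | zero => simp
  | add y z hy hz => simp only [mapDomain_add, mul_add, comapDomain_add, hy, hz]
  | single h d =>
    ext a
    simp [coeff_mul_single_apply]

end Semiring

variable {k G : Type*} [CommSemiring k] [Group G]

theorem comap_map_mapDomainAlgHom_subtype (G₁ : Subgroup G) (J : Ideal k[G₁]) :
    (J.map (mapDomainAlgHom k k G₁.subtype)).comap (mapDomainAlgHom k k G₁.subtype) = J :=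
  Ideal.comap_map_eq_self_of_retraction (mapDomainAlgHom k k G₁.subtype)
    (comapDomainAddMonoidHom G₁.subtype G₁.subtype_injective)
    (comapDomain_subtype_mul_mapDomain G₁)
    (fun y => coeff_injective (Finsupp.comapDomain_mapDomain _ G₁.subtype_injective y.coeff)) J

theorem map_map_mapDomainAlgHom_inclusion {H G₁ : Subgroup G} (hle : H ≤ G₁)
    (J : Ideal k[H]) :
    (J.map (mapDomainAlgHom k k (Subgroup.inclusion hle))).map
        (mapDomainAlgHom k k G₁.subtype) =
      J.map (mapDomainAlgHom k k H.subtype) := by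
  rw [Ideal.map_mapₐ, ← mapDomainAlgHom_comp, Subgroup.subtype_comp_inclusion]

theorem exists_mapDomainAlgHom_subtype_eq {G₁ : Subgroup G} {x : k[G]}
    (hx : ↑x.coeff.support ⊆ (G₁ : Set G)) :
    ∃ y : k[G₁], mapDomainAlgHom k k G₁.subtype y = x :=
  ⟨comapDomain G₁.subtype G₁.subtype_injective x,
    mapDomain_comapDomain (by simpa only [Subgroup.coe_subtype, Subtype.range_coe_subtype]) _⟩

end MonoidAlgebra

/-- Let `k` be a field, `G` an abelian group, `H ≤ G` and `I` an ideal of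
the group algebra `kG`.  Then `I = (I ∩ kH)·kG` if and only if for every subgroup `G₁`
generated by `H` together with finitely many elements of `G` one has
`I ∩ kG₁ = (I ∩ kH)·kG₁`. -/
theorem controlled_iff_controlled_on_fg_over (k : Type*) [Field k]
    (G : Type*) [CommGroup G] (H : Subgroup G)
    (I : Ideal (MonoidAlgebra k G)) :
    I = Ideal.map (MonoidAlgebra.mapDomainAlgHom k k H.subtype)
          (Ideal.comap (MonoidAlgebra.mapDomainAlgHom k k H.subtype) I) ↔
      ∀ (G₁ : Subgroup G) (S : Finset G) (hG₁ : G₁ = H ⊔ Subgroup.closure (S : Set G)),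
        Ideal.comap (MonoidAlgebra.mapDomainAlgHom k k G₁.subtype) I =
          Ideal.map (MonoidAlgebra.mapDomainAlgHom k k
              (Subgroup.inclusion (show H ≤ G₁ by rw [hG₁]; exact le_sup_left)))
            (Ideal.comap (MonoidAlgebra.mapDomainAlgHom k k H.subtype) I) := by
  constructor
  · intro hI G₁ S hG₁
    conv_lhs => rw [hI]
    rw [← map_map_mapDomainAlgHom_inclusion, comap_map_mapDomainAlgHom_subtype]
  · intro h
    refine le_antisymm (fun x hx => ?_) Ideal.map_comap_le
    set G₁ := H ⊔ Subgroup.closure (x.coeff.support : Set G) with hG₁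
    obtain ⟨y, hyx⟩ := exists_mapDomainAlgHom_subtype_eq (k := k) (G₁ := G₁)
      fun g hg => Subgroup.mem_sup_right (Subgroup.subset_closure hg)
    have hy : y ∈ I.comap (mapDomainAlgHom k k G₁.subtype) := by
      rwa [Ideal.mem_comap, hyx]
    rw [h G₁ x.coeff.support hG₁] at hy
    rw [← hyx, ← map_map_mapDomainAlgHom_inclusion le_sup_left]
    exact Ideal.mem_map_of_mem _ hy
end

section
/- Let p be a prime and let k be the field with p elements. Let K be a field extension of k and let γ be a k-monomorphism of K. Let E_1, …, E_e be subgroups of the multiplicative group of K and let n_1, …, n_e be pairwise distinct non-negative integers such that γ(x) = x^{p^{n_i}} for every x ∈ E_i and every i. For each i let X_i be a subset of k[E_i] which is a transcendence basis of k(E_i) over k. Then X_1 ∪ … ∪ X_e is a transcendence basis over k of the subfield k(E_1⋯E_e) generated by k and the subgroup generated by E_1, …, E_e. -/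
/-!
If `x₁, …, xₘ` are algebraically independent, then `[k(x) : k(x₁ ^ q₁, …, xₘ ^ qₘ)] = ∏ qᵢ`.
On `k[Eᵢ]` the monomorphism `γ` is the `p ^ nᵢ`-th power map, so on `Xᵢ` it raises to the power
`qᵢ = p ^ nᵢ`. A minimal algebraically dependent finite `t ⊆ ⋃ Xᵢ` has every `t \ {c}` as a
transcendence basis of `F = k(t)`, and `[F : γ F]` can be computed from any of them: it equals
`∏_{x ∈ t \ {c}} q x` for every `c ∈ t`. Hence `q` is constant on `t`, i.e. `t` lies in a single
`Xᵢ`, which is absurd. Algebraicity of `k(E₁ ⋯ Eₑ)` over `k(⋃ Xᵢ)` holds because the elements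
algebraic over a field form a field.
-/

open IntermediateField

theorem AlgHom.apply_eq_pow_of_mem_adjoin {p : ℕ} [Fact p.Prime] {K : Type*} [Field K]
    [Algebra (ZMod p) K] (γ : K →ₐ[ZMod p] K) {s : Set K} (m : ℕ)
    (h : ∀ a ∈ s, γ a = a ^ p ^ m) {a : K} (ha : a ∈ Algebra.adjoin (ZMod p) s) :
    γ a = a ^ p ^ m := by
  have : CharP K p := charP_of_injective_algebraMap (algebraMap (ZMod p) K).injective p
  induction ha using Algebra.adjoin_induction with
  | mem x hx => exact h x hx
  | algebraMap r => rw [AlgHom.commutes, ← map_pow, ZMod.pow_card_pow]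
  | add x y _ _ hx hy => rw [map_add, hx, hy, add_pow_char_pow]
  | mul x y _ _ hx hy => rw [map_mul, hx, hy, mul_pow]

theorem relfinrank_adjoin_pow_of_transcendental {F K : Type*} [Field F] [Field K] [Algebra F K]
    {x : K} (hx : Transcendental F x) (q : ℕ) :
    relfinrank F⟮x ^ q⟯ F⟮x⟯ = q := by
  let φ : RatFunc F →ₐ[F] K := F⟮x⟯.val.comp (RatFunc.algEquivOfTranscendental x hx).toAlgHom
  have hφ : φ RatFunc.X = x := by simp [φ]
  have key := relfinrank_map_map F⟮(RatFunc.X ^ q : RatFunc F)⟯ F⟮(RatFunc.X : RatFunc F)⟯ φ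
  rw [adjoin_map, adjoin_map, Set.image_singleton, Set.image_singleton, map_pow, hφ,
    RatFunc.adjoin_X, relfinrank_top_right] at key
  rw [key, RatFunc.finrank_eq_max_natDegree, ← RatFunc.algebraMap_X, ← map_pow,
    RatFunc.num_algebraMap, RatFunc.denom_algebraMap]
  simp

section

variable {k K : Type*} [Field k] [Field K] [Algebra k K]

theorem algebraicIndependent_insert_iff {s : Set K} {a : K} (ha : a ∉ s) :
    AlgebraicIndependent k ((↑) : ↥(insert a s) → K) ↔
      AlgebraicIndependent k ((↑) : s → K) ∧ Transcendental (adjoin k s) a := by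
  have h := AlgebraicIndepOn.insert_iff (R := k) (x := id) ha
  rw [Set.image_id] at h
  rwa [IntermediateField.transcendental_adjoin_iff]

theorem adjoin_image_pow_union_le (q : K → ℕ) (s u : Set K) :
    adjoin k ((fun x ↦ x ^ q x) '' s ∪ u) ≤ adjoin k (s ∪ u) :=
  adjoin_le_iff.2 <| Set.union_subset
    (Set.image_subset_iff.2 fun x hx ↦
      pow_mem (subset_adjoin k (s ∪ u) (Set.mem_union_left u hx)) (q x))
    (Set.subset_union_right.trans (subset_adjoin k _))

-- The passive generators `u` let the induction peel off one variable over the fixed base `k`.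
theorem relfinrank_adjoin_image_pow_union (q : K → ℕ) (s : Finset K) {u : Set K}
    (hsu : Disjoint (s : Set K) u)
    (hind : AlgebraicIndependent k ((↑) : ↥((s : Set K) ∪ u) → K)) :
    relfinrank (adjoin k ((fun x ↦ x ^ q x) '' s ∪ u)) (adjoin k (s ∪ u)) = ∏ x ∈ s, q x := by
  classical
  induction s using Finset.induction_on generalizing u with
  | empty => simp
  | insert a s ha ih =>
    set T := (fun x ↦ x ^ q x) '' s ∪ u
    rw [Finset.coe_insert, Set.disjoint_insert_left] at hsu
    rw [Finset.coe_insert, Set.insert_union] at hind ⊢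
    rw [Set.image_insert_eq, Set.insert_union, Finset.prod_insert ha]
    have htr : Transcendental (adjoin k T) a := fun h ↦
      ((algebraicIndependent_insert_iff fun h ↦ h.elim ha hsu.1).1 hind).2
        (h.tower_top_of_subalgebra_le (adjoin_image_pow_union_le q s u))
    have hlow : relfinrank (adjoin k (insert (a ^ q a) T)) (adjoin k (insert a T)) = q a := by
      rw [← Set.union_singleton, ← Set.union_singleton, ← adjoin_adjoin_left k T,
        ← adjoin_adjoin_left k T]
      exact relfinrank_adjoin_pow_of_transcendental htr (q a)
    have hup : relfinrank (adjoin k (insert a T)) (adjoin k (insert a ((s : Set K) ∪ u))) =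
        ∏ x ∈ s, q x := by
      rw [← Set.union_insert, ← Set.union_insert]
      exact ih (Set.disjoint_insert_right.2 ⟨ha, hsu.2⟩) (by rwa [Set.union_insert])
    rw [← relfinrank_mul_relfinrank, hlow, hup]
    · simpa only [Set.image_singleton, Set.singleton_union] using
        adjoin_image_pow_union_le q {a} T
    · simpa only [Set.union_insert] using adjoin_image_pow_union_le q s (insert a u)

theorem relfinrank_map_self_eq_of_le (γ : K →ₐ[k] K) {M F : IntermediateField k K} (hMF : M ≤ F)
    (hfin : relfinrank M F ≠ 0) (hM : M.map γ ≤ M) (hF : F.map γ ≤ F) :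
    relfinrank (F.map γ) F = relfinrank (M.map γ) M := by
  have hM' := relfinrank_mul_relfinrank hM hMF
  have hF' := relfinrank_mul_relfinrank (map_mono γ hMF) hF
  rw [relfinrank_map_map] at hF'
  exact Nat.eq_of_mul_eq_mul_left (Nat.pos_of_ne_zero hfin) (by rw [hF', ← hM', mul_comm])

theorem relfinrank_adjoin_insert_ne_zero {s : Set K} {c : K} (hc : IsAlgebraic (adjoin k s) c) :
    relfinrank (adjoin k s) (adjoin k (insert c s)) ≠ 0 := by
  have : FiniteDimensional (adjoin k s) (adjoin k s)⟮c⟯ := adjoin.finiteDimensional hc.isIntegral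
  have h1 : adjoin k (insert c s) = ((adjoin k s)⟮c⟯).restrictScalars k := by
    rw [adjoin_adjoin_left, Set.union_singleton]
  have h2 : relfinrank (adjoin k s) (((adjoin k s)⟮c⟯).restrictScalars k) =
      relfinrank (⊥ : IntermediateField (adjoin k s) K) (adjoin k s)⟮c⟯ :=
    (congrArg (relfinrank · _) (restrictScalars_bot_eq_self _).symm).trans rfl
  rw [h1, h2, relfinrank_bot_left]
  exact Module.finrank_pos.ne'

theorem map_adjoin_eq_adjoin_image_pow (γ : K →ₐ[k] K) (q : K → ℕ) {s : Set K}
    (hγ : ∀ x ∈ s, γ x = x ^ q x) : (adjoin k s).map γ = adjoin k ((fun x ↦ x ^ q x) '' s) := by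
  rw [adjoin_map, Set.image_congr hγ]

theorem relfinrank_map_adjoin_insert (γ : K →ₐ[k] K) (q : K → ℕ) {s : Finset K} {c : K}
    (hγ : ∀ x ∈ insert c (s : Set K), γ x = x ^ q x)
    (hind : AlgebraicIndependent k ((↑) : ↥(s : Set K) → K))
    (hc : IsAlgebraic (adjoin k (s : Set K)) c) :
    relfinrank ((adjoin k (insert c (s : Set K))).map γ) (adjoin k (insert c (s : Set K))) =
      ∏ x ∈ s, q x := by
  have hpow_le (u : Set K) (hu : u ⊆ insert c s) : (adjoin k u).map γ ≤ adjoin k u := by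
    simpa [map_adjoin_eq_adjoin_image_pow γ q fun x hx ↦ hγ x (hu hx)] using
      adjoin_image_pow_union_le q u ∅
  rw [relfinrank_map_self_eq_of_le γ (adjoin.mono _ _ _ (Set.subset_insert c s))
      (relfinrank_adjoin_insert_ne_zero hc) (hpow_le s (Set.subset_insert c s))
      (hpow_le _ subset_rfl),
    map_adjoin_eq_adjoin_image_pow γ q fun x hx ↦ hγ x (Set.mem_insert_of_mem c hx)]
  simpa using
    relfinrank_adjoin_image_pow_union q s (Set.disjoint_empty _) (by rwa [Set.union_empty])

theorem algebraicIndependent_of_map_eq_pow (γ : K →ₐ[k] K) {S : Set K} {q : K → ℕ}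
    (hq : ∀ x ∈ S, 0 < q x) (hγ : ∀ x ∈ S, γ x = x ^ q x)
    (hlevel : ∀ x ∈ S, AlgebraicIndependent k ((↑) : ↥{y ∈ S | q y = q x} → K)) :
    AlgebraicIndependent k ((↑) : S → K) := by
  classical
  refine algebraicIndependent_of_finite S fun t htS ht ↦ ?_
  lift t to Finset K using ht
  induction t using Finset.strongInduction with | H t ih => ?_
  obtain rfl | ⟨a, ha⟩ := t.eq_empty_or_nonempty
  · simpa using algebraicIndependent_empty
  by_contra hdep
  have hsub (c : K) (hc : c ∈ t) : AlgebraicIndependent k ((↑) : ↥(t.erase c : Set K) → K) :=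
    ih _ (Finset.erase_ssubset hc) ((Finset.coe_subset.2 (t.erase_subset c)).trans htS)
  have hdeg (c : K) (hc : c ∈ t) :
      relfinrank ((adjoin k (t : Set K)).map γ) (adjoin k t) = ∏ x ∈ t.erase c, q x := by
    have hins : insert c (t.erase c : Set K) = t := by
      rw [← Finset.coe_insert, Finset.insert_erase hc]
    have halg : IsAlgebraic (adjoin k (t.erase c : Set K)) c := by
      by_contra htr
      refine hdep ?_
      rw [← hins]
      exact (algebraicIndependent_insert_iff (by simp)).2 ⟨hsub c hc, htr⟩
    rw [← hins]
    exact relfinrank_map_adjoin_insert γ q (fun x hx ↦ hγ x (htS (hins ▸ hx))) (hsub c hc) halg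
  have hconst (b : K) (hb : b ∈ t) : q b = q a := by
    have hpos : 0 < ∏ x ∈ t.erase a, q x :=
      Finset.prod_pos fun x hx ↦ hq x (htS (Finset.mem_of_mem_erase hx))
    have := (Finset.mul_prod_erase t q hb).trans (Finset.mul_prod_erase t q ha).symm
    rw [← hdeg b hb, hdeg a ha] at this
    exact Nat.eq_of_mul_eq_mul_right hpos this
  refine hdep ((hlevel a (htS ha)).mono ?_)
  exact fun b hb ↦ ⟨htS hb, hconst b hb⟩

theorem algebraicIndependent_iUnion_of_map_eq_pow {ι : Type*} (γ : K →ₐ[k] K) {X : ι → Set K}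
    {Q : ι → ℕ} (hQ : Function.Injective Q) (hQpos : ∀ i, 0 < Q i)
    (hγ : ∀ i, ∀ x ∈ X i, γ x = x ^ Q i) (hX : ∀ i, AlgebraicIndependent k ((↑) : X i → K)) :
    AlgebraicIndependent k ((↑) : ↥(⋃ i, X i) → K) := by
  classical
  choose idx hidx using fun x (hx : x ∈ ⋃ i, X i) ↦ Set.mem_iUnion.1 hx
  let q (x : K) : ℕ := if hx : x ∈ ⋃ i, X i then Q (idx x hx) else 0
  have hq (x : K) (hx : x ∈ ⋃ i, X i) : q x = Q (idx x hx) := dif_pos hx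
  refine algebraicIndependent_of_map_eq_pow γ (q := q) (fun x hx ↦ hq x hx ▸ hQpos _)
    (fun x hx ↦ hq x hx ▸ hγ _ x (hidx x hx)) fun x hx ↦ (hX (idx x hx)).mono ?_
  rintro y ⟨hy, hqy⟩
  rw [hq y hy, hq x hx] at hqy
  exact hQ hqy ▸ hidx y hy

theorem isAlgebraic_of_mem_adjoin_iSup_units {ι : Type*} {E : ι → Subgroup Kˣ}
    {L : IntermediateField k K} (h : ∀ i, ∀ u ∈ E i, IsAlgebraic L (u : K)) {a : K}
    (ha : a ∈ adjoin k (Units.val '' ((⨆ i, E i : Subgroup Kˣ) : Set Kˣ))) :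
    IsAlgebraic L a := by
  suffices adjoin k (Units.val '' ((⨆ i, E i : Subgroup Kˣ) : Set Kˣ)) ≤
      (algebraicClosure L K).restrictScalars k from mem_algebraicClosure_iff.1 (this ha)
  rw [adjoin_le_iff]
  rintro _ ⟨u, hu, rfl⟩
  refine Subgroup.iSup_induction E (C := fun u : Kˣ ↦ (u : K) ∈ algebraicClosure L K) hu
    (fun i u hu ↦ mem_algebraicClosure_iff.2 (h i u hu)) (by simp [one_mem])
    fun u v hu hv ↦ by simpa using mul_mem hu hv

end

theorem union_transcendence_basis_of_frobenius_eigengroups_general (p : ℕ) [Fact p.Prime]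
    (K : Type*) [Field K] [Algebra (ZMod p) K]
    (γ : K →ₐ[ZMod p] K)
    (e : ℕ) (E : Fin e → Subgroup Kˣ) (n : Fin e → ℕ) (hn : Function.Injective n)
    (hγE : ∀ i, ∀ u ∈ E i, γ (u : K) = (u : K) ^ p ^ n i)
    (X : Fin e → Set K)
    (hXsub : ∀ i, X i ⊆
      (Algebra.adjoin (ZMod p) (Units.val '' ((E i : Set Kˣ))) : Subalgebra (ZMod p) K))
    (hXind : ∀ i, AlgebraicIndependent (ZMod p) ((↑) : (X i) → K))
    (hXalg : ∀ i, ∀ a ∈ IntermediateField.adjoin (ZMod p) (Units.val '' ((E i : Set Kˣ))),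
      IsAlgebraic (IntermediateField.adjoin (ZMod p) (X i)) a) :
    AlgebraicIndependent (ZMod p) ((↑) : (⋃ i, X i) → K) ∧
      ∀ a ∈ IntermediateField.adjoin (ZMod p)
          (Units.val '' (((⨆ i, E i : Subgroup Kˣ) : Subgroup Kˣ) : Set Kˣ)),
        IsAlgebraic (IntermediateField.adjoin (ZMod p) (⋃ i, X i)) a := by
  have hp : p.Prime := Fact.out
  have hγX (i : Fin e) (x : K) (hx : x ∈ X i) : γ x = x ^ p ^ n i :=
    γ.apply_eq_pow_of_mem_adjoin (n i) (by rintro _ ⟨u, hu, rfl⟩; exact hγE i u hu) (hXsub i hx)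
  refine ⟨algebraicIndependent_iUnion_of_map_eq_pow γ ((Nat.pow_right_injective hp.two_le).comp hn)
    (fun i ↦ pow_pos hp.pos (n i)) hγX hXind, fun a ha ↦ ?_⟩
  refine isAlgebraic_of_mem_adjoin_iSup_units (fun i u hu ↦ ?_) ha
  exact (hXalg i u (subset_adjoin _ _ ⟨u, hu, rfl⟩)).tower_top_of_subalgebra_le
    (adjoin.mono _ _ _ (Set.subset_iUnion X i))

/-- Let `k = 𝔽_p`, `K/k` a field extension, `γ` a `k`-monomorphism of `K`,
`E 1, …, E e` subgroups of `Kˣ` and `n 1, …, n e` pairwise distinct non-negative integers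
such that `γ` acts on `E i` by `p ^ (n i)`-th powering.  If, for each `i`, `X i` is a subset
of `k[E i]` which is a transcendence basis of `k(E i)` over `k`, then `X 1 ∪ ⋯ ∪ X e` is a
transcendence basis over `k` of the subfield `k(E 1 ⋯ E e)` generated by `k` and the
subgroup generated by the `E i`. -/
theorem union_transcendence_basis_of_frobenius_eigengroups (p : ℕ) [Fact p.Prime]
    (K : Type*) [Field K] [Algebra (ZMod p) K]
    (γ : K →ₐ[ZMod p] K) (hγinj : Function.Injective γ)
    (e : ℕ) (E : Fin e → Subgroup Kˣ) (n : Fin e → ℕ) (hn : Function.Injective n)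
    (hγE : ∀ i, ∀ u ∈ E i, γ (u : K) = (u : K) ^ p ^ n i)
    (X : Fin e → Set K)
    (hXsub : ∀ i, X i ⊆
      (Algebra.adjoin (ZMod p) (Units.val '' ((E i : Set Kˣ))) : Subalgebra (ZMod p) K))
    (hXind : ∀ i, AlgebraicIndependent (ZMod p) ((↑) : (X i) → K))
    (hXalg : ∀ i, ∀ a ∈ IntermediateField.adjoin (ZMod p) (Units.val '' ((E i : Set Kˣ))),
      IsAlgebraic (IntermediateField.adjoin (ZMod p) (X i)) a) :
    AlgebraicIndependent (ZMod p) ((↑) : (⋃ i, X i) → K) ∧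
      ∀ a ∈ IntermediateField.adjoin (ZMod p)
          (Units.val '' (((⨆ i, E i : Subgroup Kˣ) : Subgroup Kˣ) : Set Kˣ)),
        IsAlgebraic (IntermediateField.adjoin (ZMod p) (⋃ i, X i)) a :=
  union_transcendence_basis_of_frobenius_eigengroups_general p K γ e E n hn hγE X hXsub hXind hXalg
end

section
/- Let G be a torsion-free abelian group of finite rank and H a subgroup of G. Then there exists a finitely generated subgroup X of G such that H ∩ X = 0 and G/(H + X) is torsion. Moreover, if G/H is torsion-free and G_1 is a subgroup of G containing H with G_1/H finitely generated, then X can be chosen so that in addition H + X = G_1. -/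
open scoped TensorProduct

private lemma rat_den_mul_self (q : ℚ) : ((q.den : ℚ)) * q = (q.num : ℚ) := by
  have h : (q.den : ℚ) ≠ 0 := by exact_mod_cast q.den_nz
  rw [mul_comm, ← eq_div_iff h, Rat.num_div_den]

/-- Clearing denominators in the rational span of an additive subgroup. -/
private lemma exists_nsmul_mem_of_mem_span {V : Type*} [AddCommGroup V] [Module ℚ V]
    (S : AddSubgroup V) {w : V} (hw : w ∈ Submodule.span ℚ (S : Set V)) :
    ∃ M : ℕ, 0 < M ∧ (M : ℤ) • w ∈ S := by
  induction hw using Submodule.span_induction with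
  | mem x hx => exact ⟨1, one_pos, by rw [Nat.cast_one, one_smul]; exact hx⟩
  | zero => exact ⟨1, one_pos, by simpa using S.zero_mem⟩
  | add x y _ _ hx hy =>
      obtain ⟨M, hM, hMx⟩ := hx
      obtain ⟨M', hM', hM'y⟩ := hy
      refine ⟨M * M', Nat.mul_pos hM hM', ?_⟩
      have : ((M * M' : ℕ) : ℤ) • (x + y)
          = (M' : ℤ) • ((M : ℤ) • x) + (M : ℤ) • ((M' : ℤ) • y) := by
        rw [smul_add, smul_smul, smul_smul]
        push_cast
        ring_nf
      rw [this]
      exact S.add_mem (S.zsmul_mem hMx _) (S.zsmul_mem hM'y _)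
  | smul q x _ ih =>
      obtain ⟨M, hM, hMx⟩ := ih
      refine ⟨q.den * M, Nat.mul_pos q.pos hM, ?_⟩
      have : ((q.den * M : ℕ) : ℤ) • (q • x) = q.num • ((M : ℤ) • x) := by
        rw [← Int.cast_smul_eq_zsmul ℚ, ← Int.cast_smul_eq_zsmul ℚ q.num,
          ← Int.cast_smul_eq_zsmul ℚ (M : ℤ), smul_smul, smul_smul]
        congr 1
        push_cast
        rw [mul_right_comm, rat_den_mul_self]
      rw [this]
      exact S.zsmul_mem hMx _

/-- Let `G` be a torsion-free abelian group of finite rank and `H ≤ G`.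
Then there is a finitely generated subgroup `X` with `H ⊓ X = ⊥` and `G/(H ⊔ X)` torsion.
Moreover, if `G/H` is torsion-free, then for every subgroup `G₁ ⊇ H` with `G₁/H` finitely
generated, `X` can be chosen so that in addition `H ⊔ X = G₁`. -/
theorem exists_fg_complement_dense (G : Type*) [AddCommGroup G]
    (htf : ∀ (m : ℕ) (g : G), 0 < m → m • g = 0 → g = 0)
    (hfr : FiniteDimensional ℚ (ℚ ⊗[ℤ] G))
    (H : AddSubgroup G) :
    (∃ X : AddSubgroup G, X.FG ∧ H ⊓ X = ⊥ ∧ ∀ g : G, ∃ m : ℕ, 0 < m ∧ m • g ∈ H ⊔ X) ∧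
    ((∀ (m : ℕ) (g : G ⧸ H), 0 < m → m • g = 0 → g = 0) →
      ∀ G₁ : AddSubgroup G, H ≤ G₁ → AddGroup.FG (↥G₁ ⧸ H.addSubgroupOf G₁) →
        ∃ X : AddSubgroup G, X.FG ∧ H ⊓ X = ⊥ ∧ H ⊔ X = G₁) := by
  classical
  constructor
  · -- Part 1
    set V := ℚ ⊗[ℤ] G with hV
    set f : G →ₗ[ℤ] V := TensorProduct.mk ℤ ℚ G 1 with hfdef
    letI : IsLocalizedModule (nonZeroDivisors ℤ) f :=
      (isLocalizedModule_iff_isBaseChange (nonZeroDivisors ℤ) ℚ _).mpr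
        (TensorProduct.isBaseChange ℤ G ℚ)
    -- injectivity of f
    have hinj : ∀ g : G, f g = 0 → g = 0 := by
      intro g hg
      obtain ⟨s, hs⟩ := (IsLocalizedModule.eq_zero_iff (nonZeroDivisors ℤ) f).mp hg
      rw [Submonoid.smul_def] at hs
      have hs0 : (s : ℤ) ≠ 0 := nonZeroDivisors.coe_ne_zero s
      refine htf (s : ℤ).natAbs g (Int.natAbs_pos.mpr hs0) ?_
      rw [← natCast_zsmul]
      rcases Int.natAbs_eq (s : ℤ) with h | h
      · rw [← h]; exact hs
      · rw [show (((s : ℤ).natAbs : ℤ)) = -(s : ℤ) by omega, neg_smul, hs, neg_zero]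
    -- the image of H as a subgroup of V and its rational span
    set Hf : AddSubgroup V := H.map f.toAddMonoidHom with hHf
    set W : Submodule ℚ V := Submodule.span ℚ (Hf : Set V) with hW
    -- the quotient map
    have hspanf : Submodule.span ℚ (Set.range f) = ⊤ := by
      rw [eq_top_iff]
      rintro v -
      obtain ⟨⟨g, s⟩, hgs⟩ := IsLocalizedModule.surj (nonZeroDivisors ℤ) f v
      rw [Submonoid.smul_def] at hgs
      have hs0 : ((s : ℤ) : ℚ) ≠ 0 := by
        exact_mod_cast nonZeroDivisors.coe_ne_zero s
      have hv : v = ((s : ℤ) : ℚ)⁻¹ • f g := by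
        rw [← hgs, ← Int.cast_smul_eq_zsmul ℚ, smul_smul, inv_mul_cancel₀ hs0, one_smul]
      rw [hv]
      exact Submodule.smul_mem _ _ (Submodule.subset_span ⟨g, rfl⟩)
    have hspant : Submodule.span ℚ (W.mkQ '' Set.range f) = ⊤ := by
      rw [Submodule.span_image, hspanf, Submodule.map_top, Submodule.range_mkQ]
    obtain ⟨b, hbt, hbspan, hbind⟩ := exists_linearIndependent ℚ (W.mkQ '' Set.range f)
    have hbfin : b.Finite := hbind.setFinite
    haveI : Fintype b := hbfin.fintype
    have hpre : ∀ v : b, ∃ g : G, W.mkQ (f g) = (v : V ⧸ W) := by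
      intro v
      obtain ⟨u, ⟨g, rfl⟩, hu⟩ := hbt v.2
      exact ⟨g, hu⟩
    choose gf hgf using hpre
    set X : AddSubgroup G := AddSubgroup.closure (Set.range gf) with hX
    have hmemX : ∀ v : b, gf v ∈ X := fun v => AddSubgroup.subset_closure ⟨v, rfl⟩
    refine ⟨X, (AddSubgroup.fg_iff X).mpr ⟨Set.range gf, rfl, Set.finite_range gf⟩, ?_, ?_⟩
    · -- H ⊓ X = ⊥
      rw [eq_bot_iff]
      intro x hx
      rw [AddSubgroup.mem_inf] at hx
      obtain ⟨hxH, hxX⟩ := hx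
      rw [AddSubgroup.mem_bot]
      have hxs : x ∈ (Submodule.span ℤ (Set.range gf)).toAddSubgroup := by
        rw [Submodule.span_int_eq_addSubgroupClosure]; exact hxX
      obtain ⟨c, hc⟩ := (Submodule.mem_span_range_iff_exists_fun ℤ).1 hxs
      have h0 : W.mkQ (f x) = 0 := by
        rw [Submodule.mkQ_apply, Submodule.Quotient.mk_eq_zero]
        exact Submodule.subset_span (AddSubgroup.mem_map_of_mem _ hxH)
      have hsum : W.mkQ (f x) = ∑ v : b, (c v : ℚ) • (v : V ⧸ W) := by
        rw [← hc, map_sum, map_sum]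
        refine Finset.sum_congr rfl fun v _ => ?_
        rw [map_zsmul, map_zsmul, hgf, Int.cast_smul_eq_zsmul]
      have hzero : ∑ v : b, (c v : ℚ) • (v : V ⧸ W) = 0 := by rw [← hsum]; exact h0
      have hind := linearIndependent_iff'.1 hbind Finset.univ (fun v => (c v : ℚ))
        (by simpa using hzero)
      have hczero : ∀ v : b, c v = 0 := by
        intro v
        simpa using hind v (Finset.mem_univ v)
      rw [← hc]
      simp [hczero]
    · -- torsion quotient
      intro g
      have hg : W.mkQ (f g) ∈ Submodule.span ℚ (Set.range ((↑) : b → V ⧸ W)) := by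
        rw [Subtype.range_coe, hbspan, hspant]
        exact Submodule.mem_top
      obtain ⟨q, hq⟩ := (Submodule.mem_span_range_iff_exists_fun ℚ).1 hg
      set N : ℕ := ∏ v : b, (q v).den with hN
      have hNpos : 0 < N := Finset.prod_pos fun v _ => (q v).pos
      have hdvd : ∀ v : b, (q v).den ∣ N := fun v =>
        Finset.dvd_prod_of_mem _ (Finset.mem_univ v)
      choose k hk using hdvd
      set c : b → ℤ := fun v => (q v).num * (k v : ℤ) with hcdef
      have hc : ∀ v : b, ((c v : ℚ)) = q v * N := by
        intro v
        have key := rat_den_mul_self (q v)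
        have hNk : (N : ℚ) = ((q v).den : ℚ) * (k v : ℚ) := by exact_mod_cast hk v
        show (((q v).num * (k v : ℤ) : ℤ) : ℚ) = q v * N
        push_cast
        rw [hNk, ← key]
        ring
      set y : G := N • g - ∑ v : b, c v • gf v with hy
      have hfyW : f y ∈ W := by
        have hmk : W.mkQ (f y) = 0 := by
          rw [hy, map_sub, map_sub, map_nsmul, map_nsmul, map_sum, map_sum]
          have h1 : ∀ v : b, W.mkQ (f (c v • gf v)) = (c v : ℚ) • (v : V ⧸ W) := by
            intro v
            rw [map_zsmul, map_zsmul, hgf, Int.cast_smul_eq_zsmul]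
          have h2 : (N : ℕ) • W.mkQ (f g) = ∑ v : b, ((q v * N : ℚ)) • (v : V ⧸ W) := by
            rw [← hq, Finset.smul_sum]
            refine Finset.sum_congr rfl fun v _ => ?_
            rw [← Nat.cast_smul_eq_nsmul ℚ, smul_smul, mul_comm]
          rw [sub_eq_zero]
          calc (N : ℕ) • W.mkQ (f g) = ∑ v : b, ((q v * N : ℚ)) • (v : V ⧸ W) := h2
            _ = ∑ v : b, W.mkQ (f (c v • gf v)) := by
                refine Finset.sum_congr rfl fun v _ => ?_
                rw [h1 v, hc v]
        rwa [Submodule.mkQ_apply, Submodule.Quotient.mk_eq_zero] at hmk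
      obtain ⟨M, hMpos, hMfy⟩ := exists_nsmul_mem_of_mem_span Hf hfyW
      rw [hHf] at hMfy
      obtain ⟨h, hhH, hfh⟩ := AddSubgroup.mem_map.1 hMfy
      have hMyH : (M : ℤ) • y ∈ H := by
        have : f ((M : ℤ) • y - h) = 0 := by
          rw [map_sub, map_zsmul]
          rw [show f.toAddMonoidHom h = f h from rfl] at hfh
          rw [hfh, sub_self]
        have := hinj _ this
        have h2 : (M : ℤ) • y = h := by rwa [sub_eq_zero] at this
        rw [h2]; exact hhH
      refine ⟨M * N, Nat.mul_pos hMpos hNpos, ?_⟩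
      have hNg : N • g = y + ∑ v : b, c v • gf v := by rw [hy]; abel
      rw [mul_smul, hNg, smul_add]
      have h1 : M • y ∈ H := by
        rw [← natCast_zsmul]; exact hMyH
      have h2 : M • (∑ v : b, c v • gf v) ∈ X :=
        X.nsmul_mem (AddSubgroup.sum_mem _ fun v _ => X.zsmul_mem (hmemX v) _) M
      exact AddSubgroup.add_mem _ ((le_sup_left : H ≤ H ⊔ X) h1)
        ((le_sup_right : X ≤ H ⊔ X) h2)
  · -- Part 2
    intro htf' G₁ hHG₁ hfg
    set Q := ↥G₁ ⧸ H.addSubgroupOf G₁ with hQ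
    set π : ↥G₁ →+ Q := QuotientAddGroup.mk' (H.addSubgroupOf G₁) with hπ
    have htfQ : ∀ (m : ℕ) (x : Q), 0 < m → m • x = 0 → x = 0 := by
      intro m x hm hx
      obtain ⟨g, rfl⟩ := QuotientAddGroup.mk'_surjective _ x
      have h1 : π (m • g) = 0 := by rw [map_nsmul]; exact hx
      have h2 : (m • g : ↥G₁) ∈ H.addSubgroupOf G₁ := (QuotientAddGroup.eq_zero_iff _).1 h1
      rw [AddSubgroup.mem_addSubgroupOf] at h2
      have h3 : m • ((g : G) : G ⧸ H) = 0 := by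
        rw [← QuotientAddGroup.mk_nsmul]
        exact (QuotientAddGroup.eq_zero_iff _).2 (by exact_mod_cast h2)
      have h4 : ((g : G) : G ⧸ H) = 0 := htf' m _ hm h3
      have h5 : (g : G) ∈ H := (QuotientAddGroup.eq_zero_iff _).1 h4
      exact (QuotientAddGroup.eq_zero_iff _).2 (AddSubgroup.mem_addSubgroupOf.2 h5)
    haveI : Module.Finite ℤ Q := Module.Finite.iff_addGroup_fg.mpr hfg
    haveI : NoZeroSMulDivisors ℤ Q := by
      refine ⟨fun {c x} h => ?_⟩
      by_cases hc : c = 0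
      · exact Or.inl hc
      · refine Or.inr (htfQ c.natAbs x (Int.natAbs_pos.mpr hc) ?_)
        rw [← natCast_zsmul]
        rcases Int.natAbs_eq c with h' | h'
        · rw [← h']; exact h
        · rw [show ((c.natAbs : ℤ)) = -c by omega, neg_smul, h, neg_zero]
    haveI : Module.Free ℤ Q := Module.free_of_finite_type_torsion_free'
    set b := Module.Free.chooseBasis ℤ Q with hb
    have hxch : ∀ i, ∃ g : ↥G₁, π g = b i := fun i => QuotientAddGroup.mk'_surjective _ (b i)
    choose xf hxf using hxch
    set X : AddSubgroup G := AddSubgroup.closure (Set.range fun i => ((xf i : G))) with hX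
    have hmemX : ∀ i, ((xf i : G)) ∈ X := fun i => AddSubgroup.subset_closure ⟨i, rfl⟩
    have hcoe : ∀ (c : Module.Free.ChooseBasisIndex ℤ Q → ℤ),
        ((↑(∑ i, c i • xf i) : G)) = ∑ i, c i • ((xf i : G)) := by
      intro c
      rw [show ((↑(∑ i, c i • xf i) : G)) = G₁.subtype (∑ i, c i • xf i) from rfl, map_sum]
      rfl
    have hπsum : ∀ (c : Module.Free.ChooseBasisIndex ℤ Q → ℤ),
        π (∑ i, c i • xf i) = ∑ i, c i • b i := by
      intro c
      rw [map_sum]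
      exact Finset.sum_congr rfl fun i _ => by rw [map_zsmul, hxf]
    refine ⟨X, (AddSubgroup.fg_iff X).mpr ⟨_, rfl, Set.finite_range _⟩, ?_, ?_⟩
    · -- H ⊓ X = ⊥
      rw [eq_bot_iff]
      intro x hx
      rw [AddSubgroup.mem_inf] at hx
      obtain ⟨hxH, hxX⟩ := hx
      rw [AddSubgroup.mem_bot]
      have hxs : x ∈ (Submodule.span ℤ (Set.range fun i => ((xf i : G)))).toAddSubgroup := by
        rw [Submodule.span_int_eq_addSubgroupClosure]; exact hxX
      obtain ⟨c, hcs⟩ := (Submodule.mem_span_range_iff_exists_fun ℤ).1 hxs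
      have hxe : (⟨x, hHG₁ hxH⟩ : ↥G₁) = ∑ i, c i • xf i := by
        apply Subtype.ext
        rw [hcoe c]
        exact hcs.symm
      have h0 : π ⟨x, hHG₁ hxH⟩ = 0 :=
        (QuotientAddGroup.eq_zero_iff _).2 (AddSubgroup.mem_addSubgroupOf.2 hxH)
      have hsum : ∑ i, c i • b i = 0 := by rw [← hπsum c, ← hxe, h0]
      have hind := linearIndependent_iff'.1 b.linearIndependent Finset.univ c
        (by simpa using hsum)
      have hczero : ∀ i, c i = 0 := fun i => hind i (Finset.mem_univ i)
      rw [← hcs]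
      simp [hczero]
    · -- H ⊔ X = G₁
      refine le_antisymm (sup_le hHG₁ ?_) ?_
      · rw [hX, AddSubgroup.closure_le]
        rintro - ⟨i, rfl⟩
        exact (xf i).2
      · intro g hg
        set c : Module.Free.ChooseBasisIndex ℤ Q → ℤ := fun i => b.repr (π ⟨g, hg⟩) i with hcdef
        have hrepr : π (∑ i, c i • xf i) = π ⟨g, hg⟩ := by
          rw [hπsum c]
          exact b.sum_repr (π ⟨g, hg⟩)
        have hdiff : (⟨g, hg⟩ : ↥G₁) - ∑ i, c i • xf i ∈ H.addSubgroupOf G₁ := by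
          have hπ0 : π ((⟨g, hg⟩ : ↥G₁) - ∑ i, c i • xf i) = 0 := by
            rw [map_sub, hrepr, sub_self]
          exact (QuotientAddGroup.eq_zero_iff _).1 hπ0
        rw [AddSubgroup.mem_addSubgroupOf] at hdiff
        have hdG : g - ((↑(∑ i, c i • xf i) : G)) ∈ H := by exact_mod_cast hdiff
        have hsX : ((↑(∑ i, c i • xf i) : G)) ∈ X := by
          rw [hcoe c]
          exact AddSubgroup.sum_mem _ fun i _ => X.zsmul_mem (hmemX i) _
        have : g = (g - ((↑(∑ i, c i • xf i) : G))) + ((↑(∑ i, c i • xf i) : G)) := by abel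
        rw [this]
        exact AddSubgroup.add_mem _ ((le_sup_left : H ≤ H ⊔ X) hdG)
          ((le_sup_right : X ≤ H ⊔ X) hsX)
end
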